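/- Let v^k, w^k ∈ ℝ^d satisfy w^k = v^k + θ^k(v^k - v^{k-1}) with 0 ≤ θ^k ≤ θ̄ < 1, and suppose ‖v^{k+1} - w^k‖ ≤ rR for all k. Then Σ_{i=1}^k ‖v^i - v^{i-1}‖² ≤ r²kR²/(1 - θ̄)². -/

import Mathlib

open Finset

/-!
Each increment `v (k+1) - v k` is the step `v (k+1) - w k` plus `θ k` times the previous
increment, so the increment norms obey `aₖ₊₁ ≤ r R + θ̄ aₖ` and stay below the fixed point
`r R / (1 - θ̄)` of this recursion; summing the squares of `k` such increments gives the bound.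
Since `0 - 1 = 0` in `ℕ`, the hypothesis on `w` forces `w 0 = v 0`, which starts the recursion.
-/

lemma le_div_one_sub_of_le_add_mul {a : ℕ → ℝ} {c q : ℝ} (hc : 0 ≤ c) (hq0 : 0 ≤ q)
    (hq1 : q < 1) (h0 : a 0 ≤ c) (hsucc : ∀ k, a (k + 1) ≤ c + q * a k) :
    ∀ k, a k ≤ c / (1 - q) := by
  have hq : 0 < 1 - q := sub_pos.mpr hq1
  intro k
  induction k with
  | zero => exact h0.trans (le_div_self hc hq (by linarith))
  | succ k ih =>
    calc a (k + 1) ≤ c + q * (c / (1 - q)) := (hsucc k).trans (by gcongr)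
      _ = c / (1 - q) := by field_simp; ring

lemma norm_sub_le_of_eq_add_smul {E : Type*} [SeminormedAddCommGroup E] [NormedSpace ℝ E]
    {x y z w : E} {θ : ℝ} (hθ : 0 ≤ θ) (hw : w = y + θ • (y - x)) :
    ‖z - y‖ ≤ ‖z - w‖ + θ * ‖y - x‖ := by
  calc ‖z - y‖ = ‖(z - w) + θ • (y - x)‖ := by rw [hw]; abel_nf
    _ ≤ ‖z - w‖ + θ * ‖y - x‖ := by
      grw [norm_add_le, norm_smul, Real.norm_of_nonneg hθ]

theorem stmt12_general {d : ℕ} (r R θbar : ℝ) (hθ1 : θbar < 1)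
    (v w : ℕ → EuclideanSpace ℝ (Fin d)) (θ : ℕ → ℝ)
    (hθ : ∀ k, 0 ≤ θ k ∧ θ k ≤ θbar)
    (hw : ∀ k : ℕ, w k = v k + θ k • (v k - v (k - 1)))
    (hstep : ∀ k : ℕ, ‖v (k + 1) - w k‖ ≤ r * R) :
    ∀ k : ℕ, ∑ i ∈ Finset.Icc 1 k, ‖v i - v (i - 1)‖ ^ 2 ≤
      r ^ 2 * k * R ^ 2 / (1 - θbar) ^ 2 := by
  intro k
  have hw0 : w 0 = v 0 := by simpa using hw 0
  have hincr : ∀ j, ‖v (j + 1) - v j‖ ≤ r * R / (1 - θbar) := by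
    refine le_div_one_sub_of_le_add_mul ((norm_nonneg _).trans (hstep 0))
      ((hθ 0).1.trans (hθ 0).2) hθ1 (by simpa [hw0] using hstep 0) fun j => ?_
    calc ‖v (j + 1 + 1) - v (j + 1)‖
        ≤ ‖v (j + 1 + 1) - w (j + 1)‖ + θ (j + 1) * ‖v (j + 1) - v j‖ :=
          norm_sub_le_of_eq_add_smul (hθ (j + 1)).1 (hw (j + 1))
      _ ≤ r * R + θbar * ‖v (j + 1) - v j‖ := by gcongr; exacts [hstep _, (hθ _).2]
  calc ∑ i ∈ Icc 1 k, ‖v i - v (i - 1)‖ ^ 2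
      ≤ ∑ _i ∈ Icc 1 k, (r * R / (1 - θbar)) ^ 2 := by
        refine sum_le_sum fun i hi => ?_
        have h := hincr (i - 1)
        rw [Nat.sub_add_cancel (mem_Icc.mp hi).1] at h
        exact pow_le_pow_left₀ (norm_nonneg _) h 2
    _ = r ^ 2 * k * R ^ 2 / (1 - θbar) ^ 2 := by
        rw [sum_const, Nat.card_Icc, nsmul_eq_mul, div_pow, mul_pow]; push_cast; ring

/-- For iterates `w k = v k + θ k • (v k - v (k-1))` with `0 ≤ θ k ≤ θ̄ < 1`
(with the convention `v (0 - 1) = v 0`, i.e. zero momentum at start)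
and `‖v (k+1) - w k‖ ≤ r R`, we have
`∑_{i=1}^k ‖v i - v (i-1)‖² ≤ r² k R² / (1 - θ̄)²`. -/
theorem stmt12 {d : ℕ} (r R θbar : ℝ) (hr : 0 < r) (hR : 0 < R)
    (hθ0 : 0 ≤ θbar) (hθ1 : θbar < 1)
    (v w : ℕ → EuclideanSpace ℝ (Fin d)) (θ : ℕ → ℝ)
    (hθ : ∀ k, 0 ≤ θ k ∧ θ k ≤ θbar)
    (hw : ∀ k : ℕ, w k = v k + θ k • (v k - v (k - 1)))
    (hstep : ∀ k : ℕ, ‖v (k + 1) - w k‖ ≤ r * R) :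
    ∀ k : ℕ, ∑ i ∈ Finset.Icc 1 k, ‖v i - v (i - 1)‖ ^ 2 ≤
      r ^ 2 * k * R ^ 2 / (1 - θbar) ^ 2 :=
  stmt12_general r R θbar hθ1 v w θ hθ hw hstep
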